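/- arXiv:2105.02847 — 5 statements merged into one kernel-verified Lean document; each statement's English description precedes it below -/
import Mathlib

section
/- Let G be a group and let L be a subgroup of G such that L is infinite, L is simple as a group, and the normal closure of L in G equals G. Then every finite-index subgroup of G equals G itself (equivalently, G has no proper subgroups of finite index). -/
/-! An infinite simple group has no proper normal subgroup of finite index, since its trivial
subgroup has infinite index. Hence every normal finite-index subgroup of `G` meets `L` in all of
`L`, and so contains the normal closure of `L`, which is `G`. Applying this to the normal core of a
finite-index subgroup `H`, which is again of finite index, gives `H = G`. -/

theorem IsSimpleGroup.eq_top_of_normal_of_finiteIndex {L : Type*} [Group L] [Infinite L]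
    [IsSimpleGroup L] (K : Subgroup L) [K.Normal] [K.FiniteIndex] : K = ⊤ :=
  (eq_bot_or_eq_top_of_normal K ‹_›).resolve_left fun hbot =>
    K.index_ne_zero_of_finite (by rw [hbot, Subgroup.index_bot, Nat.card_eq_zero_of_infinite])

namespace Subgroup

variable {G : Type*} [Group G]

theorem le_of_normal_of_finiteIndex_of_isSimpleGroup {L : Subgroup G} [Infinite L]
    [IsSimpleGroup L] (N : Subgroup G) [hN : N.Normal] [N.FiniteIndex] : L ≤ N :=
  have : (N.subgroupOf L).Normal := hN.subgroupOf L
  subgroupOf_eq_top.mp (IsSimpleGroup.eq_top_of_normal_of_finiteIndex _)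

theorem normalClosure_le_of_normal_of_finiteIndex_of_isSimpleGroup {L : Subgroup G} [Infinite L]
    [IsSimpleGroup L] (N : Subgroup G) [N.Normal] [N.FiniteIndex] :
    normalClosure (L : Set G) ≤ N :=
  normalClosure_le_normal (le_of_normal_of_finiteIndex_of_isSimpleGroup N)

end Subgroup

/-- If a group `G` has an infinite simple subgroup `L` whose normal closure is all
of `G`, then `G` has no proper finite-index subgroups. -/
theorem finiteIndex_eq_top_of_normalClosure_simple_subgroup
    {G : Type*} [Group G] (L : Subgroup G)
    (hinf : Infinite L) (hsimple : IsSimpleGroup L)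
    (hnc : Subgroup.normalClosure (L : Set G) = ⊤) :
    ∀ H : Subgroup G, H.FiniteIndex → H = ⊤ := by
  intro H hH
  have : H.normalCore.FiniteIndex := H.finiteIndex_normalCore
  have hcore : ⊤ ≤ H.normalCore :=
    hnc ▸ Subgroup.normalClosure_le_of_normal_of_finiteIndex_of_isSimpleGroup H.normalCore
  exact top_le_iff.mp (hcore.trans H.normalCore_le)
end

section
/- Let G be a group containing a subgroup L that is infinite and simple as a group and whose normal closure in G equals G. If G contains a nontrivial element of finite order, then G is not virtually torsion-free: there is no finite-index subgroup H of G such that every element of finite order in H is trivial. -/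
/-- If a group `G` has an infinite simple subgroup `L` whose normal closure is all of
`G`, and `G` has a nontrivial element of finite order, then `G` is not virtually
torsion-free. -/
theorem not_virtually_torsionFree_of_normalClosure_simple_subgroup
    {G : Type*} [Group G] (L : Subgroup G)
    (hinf : Infinite L) (hsimple : IsSimpleGroup L)
    (hnc : Subgroup.normalClosure (L : Set G) = ⊤)
    (g : G) (hg : g ≠ 1) (hgfin : IsOfFinOrder g) :
    ¬ ∃ H : Subgroup G, H.FiniteIndex ∧ ∀ h : G, h ∈ H → IsOfFinOrder h → h = 1 := by
  rintro ⟨H, hHfi, hHtf⟩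
  set N := H.normalCore with hN
  have hNnormal : N.Normal := H.normalCore_normal
  have hNfi : N.FiniteIndex := H.finiteIndex_normalCore
  -- N.subgroupOf L is normal of finite index in L
  have hsub_normal : (N.subgroupOf L).Normal := hNnormal.subgroupOf L
  have hsub_fi : (N.subgroupOf L).FiniteIndex := inferInstance
  rcases hsub_normal.eq_bot_or_eq_top with hbot | htop
  · -- then L would be finite
    have : (⊥ : Subgroup L).index = Nat.card L := Subgroup.index_bot
    have hfin : (Nat.card L) ≠ 0 := by
      rw [← this, ← hbot]
      exact hsub_fi.index_ne_zero
    exact absurd (Nat.card_eq_zero_of_infinite (α := L)) hfin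
  · have hle : L ≤ N := (Subgroup.subgroupOf_eq_top).mp htop
    have : Subgroup.normalClosure (L : Set G) ≤ N :=
      Subgroup.normalClosure_le_normal hle
    rw [hnc] at this
    have hgN : g ∈ N := this (Subgroup.mem_top g)
    exact hg (hHtf g (H.normalCore_le hgN) hgfin)
end

section
/- Let p be a prime, let m, n ≥ 1, let φ : F_n → Aut(ℤ/pℤ) be a homomorphism, let A = ℤ/pℤ ⋊_φ F_n, let i, j : F_m → F_n be homomorphisms, let ĩ = inr ∘ i and j̃ = inr ∘ j : F_m → A, and let Γ = A *_{F_m} A be the pushout of ĩ and j̃ with canonical maps of₁, of₂ : A → Γ. Let Λ' = F_n *_{F_m} F_n be the pushout of i and j with canonical maps of'₁, of'₂ : F_n → Λ'. Then the homomorphism π : Γ → Λ' induced by the projections rightHom : A → F_n (i.e. π ∘ ofₖ = of'ₖ ∘ rightHom for k = 1, 2) is surjective, and its kernel is the normal closure in Γ of the union of₁(inl(ℤ/pℤ)) ∪ of₂(inl(ℤ/pℤ)) of the images of the two canonical copies of ℤ/pℤ. -/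
/-
The sections `inr` of the projections `rightHom` induce a homomorphism `σ` back from the
pushout of the free groups, with `π ∘ σ = id`; hence `π` is surjective. Conversely, each
generator `g` of a factor differs from `inr (rightHom g)` by an element of `inl (ℤ/pℤ)`, so
`σ ∘ π` is the identity modulo the normal closure `N` of the two copies of `ℤ/pℤ`; thus
`ker π ≤ N`, and `N ≤ ker π` is clear.
-/

universe u

/-- The two-element family of groups `G₁, G₂`, indexed by `Bool`. -/
abbrev fam2 (G₁ G₂ : Type u) : Bool → Type u := fun b => bif b then G₁ else G₂

instance fam2Group (G₁ G₂ : Type u) [g₁ : Group G₁] [g₂ : Group G₂] :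
    ∀ b, Group (fam2 G₁ G₂ b)
  | true => g₁
  | false => g₂

/-- A pair of homomorphisms `φ₁ : K →* G₁`, `φ₂ : K →* G₂` as a `Bool`-indexed family,
so that `Monoid.PushoutI (fam2Hom φ₁ φ₂)` is the pushout `G₁ *_K G₂`. -/
def fam2Hom {K G₁ G₂ : Type u} [Group K] [Group G₁] [Group G₂]
    (φ₁ : K →* G₁) (φ₂ : K →* G₂) : ∀ b, K →* fam2 G₁ G₂ b
  | true => φ₁
  | false => φ₂

namespace Monoid.PushoutI

variable {ι K : Type*} {G H : ι → Type*} [Group K] [∀ i, Group (G i)] [∀ i, Group (H i)]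
  {φ : ∀ i, K →* G i} {ψ : ∀ i, K →* H i}

def map (f : ∀ i, G i →* H i) (hf : ∀ i, (f i).comp (φ i) = ψ i) : PushoutI φ →* PushoutI ψ :=
  lift (fun i => (of i).comp (f i)) (base ψ) fun i => by
    rw [MonoidHom.comp_assoc, hf, of_comp_eq_base]

@[simp]
theorem map_of (f : ∀ i, G i →* H i) (hf : ∀ i, (f i).comp (φ i) = ψ i) {i : ι} (g : G i) :
    map f hf (of i g) = of i (f i g) :=
  lift_of _ _ _ g

@[simp]
theorem map_base (f : ∀ i, G i →* H i) (hf : ∀ i, (f i).comp (φ i) = ψ i) (k : K) :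
    map f hf (base φ k) = base ψ k :=
  lift_base _ _ _ k

theorem map_comp_of (f : ∀ i, G i →* H i) (hf : ∀ i, (f i).comp (φ i) = ψ i) (i : ι) :
    (map f hf).comp (of i) = (of i).comp (f i) :=
  MonoidHom.ext (map_of f hf)

variable {r : ∀ i, G i →* H i} {s : ∀ i, H i →* G i}

theorem leftInverse_map_map (hr : ∀ i, (r i).comp (φ i) = ψ i)
    (hs : ∀ i, (s i).comp (ψ i) = φ i) (hrs : ∀ i, Function.LeftInverse (r i) (s i)) :
    Function.LeftInverse (map r hr) (map s hs) := by
  suffices (map r hr).comp (map s hs) = MonoidHom.id _ from DFunLike.congr_fun this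
  exact hom_ext (fun i => by ext h; simp [hrs i h]) (by ext k; simp)

theorem map_surjective_of_leftInverse (hr : ∀ i, (r i).comp (φ i) = ψ i)
    (hs : ∀ i, (s i).comp (ψ i) = φ i) (hrs : ∀ i, Function.LeftInverse (r i) (s i)) :
    Function.Surjective (map r hr) :=
  (leftInverse_map_map hr hs hrs).surjective

-- `g` and `s i (r i g)` differ by an element of the kernel of `r i`.
theorem mk'_comp_map_comp_map_of_leftInverse (hr : ∀ i, (r i).comp (φ i) = ψ i)
    (hs : ∀ i, (s i).comp (ψ i) = φ i) (hrs : ∀ i, Function.LeftInverse (r i) (s i)) :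
    ((QuotientGroup.mk' (Subgroup.normalClosure (⋃ i, of i '' (r i).ker))).comp
      (map s hs)).comp (map r hr) = QuotientGroup.mk' _ := by
  refine hom_ext (fun i => ?_) (by ext k; simp)
  ext g
  have hker : (s i (r i g))⁻¹ * g ∈ (r i).ker := by
    simp [hrs i (r i g)]
  have hmem : (of i ((s i (r i g))⁻¹ * g) : PushoutI φ) ∈ ⋃ i, of i '' (r i).ker :=
    Set.mem_iUnion_of_mem i ⟨_, hker, rfl⟩
  simpa [QuotientGroup.eq] using Subgroup.subset_normalClosure hmem

theorem ker_map_of_leftInverse (hr : ∀ i, (r i).comp (φ i) = ψ i)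
    (hs : ∀ i, (s i).comp (ψ i) = φ i) (hrs : ∀ i, Function.LeftInverse (r i) (s i)) :
    (map r hr).ker = Subgroup.normalClosure (⋃ i, of i '' (r i).ker) := by
  refine le_antisymm (fun x hx => ?_) (Subgroup.normalClosure_le_normal ?_)
  · rw [← QuotientGroup.ker_mk' (Subgroup.normalClosure _), MonoidHom.mem_ker,
      ← mk'_comp_map_comp_map_of_leftInverse hr hs hrs]
    simp [MonoidHom.mem_ker.mp hx]
  · rintro _ ⟨_, ⟨i, rfl⟩, g, hg, rfl⟩
    simp [MonoidHom.mem_ker.mp hg]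

end Monoid.PushoutI

def fam2Map {G₁ G₂ H₁ H₂ : Type u} [Group G₁] [Group G₂] [Group H₁] [Group H₂]
    (f₁ : G₁ →* H₁) (f₂ : G₂ →* H₂) : ∀ b, fam2 G₁ G₂ b →* fam2 H₁ H₂ b
  | true => f₁
  | false => f₂

theorem fam2Map_comp_fam2Hom {K G₁ G₂ H₁ H₂ : Type u} [Group K] [Group G₁] [Group G₂] [Group H₁]
    [Group H₂] (f₁ : G₁ →* H₁) (f₂ : G₂ →* H₂) (φ₁ : K →* G₁) (φ₂ : K →* G₂) (b : Bool) :
    (fam2Map f₁ f₂ b).comp (fam2Hom φ₁ φ₂ b) = fam2Hom (f₁.comp φ₁) (f₂.comp φ₂) b := by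
  cases b <;> rfl

theorem pushout_semidirect_proj_surjective_and_ker_general
    (p m n : ℕ)
    (φ : FreeGroup (Fin n) →* MulAut (Multiplicative (ZMod p)))
    (i j : FreeGroup (Fin m) →* FreeGroup (Fin n))
    (π : Monoid.PushoutI
          (fam2Hom
            ((SemidirectProduct.inr :
                FreeGroup (Fin n) →* Multiplicative (ZMod p) ⋊[φ] FreeGroup (Fin n)).comp i)
            ((SemidirectProduct.inr :
                FreeGroup (Fin n) →* Multiplicative (ZMod p) ⋊[φ] FreeGroup (Fin n)).comp j))
          →* Monoid.PushoutI (fam2Hom i j))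
    (hπ₁ : π.comp (Monoid.PushoutI.of
              (φ := fam2Hom (SemidirectProduct.inr.comp i) (SemidirectProduct.inr.comp j)) true)
        = (Monoid.PushoutI.of (φ := fam2Hom i j) true).comp
            (SemidirectProduct.rightHom :
              Multiplicative (ZMod p) ⋊[φ] FreeGroup (Fin n) →* FreeGroup (Fin n)))
    (hπ₂ : π.comp (Monoid.PushoutI.of
              (φ := fam2Hom (SemidirectProduct.inr.comp i) (SemidirectProduct.inr.comp j)) false)
        = (Monoid.PushoutI.of (φ := fam2Hom i j) false).comp
            (SemidirectProduct.rightHom :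
              Multiplicative (ZMod p) ⋊[φ] FreeGroup (Fin n) →* FreeGroup (Fin n))) :
    Function.Surjective π ∧
      π.ker = Subgroup.normalClosure
        (Set.range ((Monoid.PushoutI.of
            (φ := fam2Hom (SemidirectProduct.inr.comp i) (SemidirectProduct.inr.comp j))
            true).comp
          (SemidirectProduct.inl :
            Multiplicative (ZMod p) →* Multiplicative (ZMod p) ⋊[φ] FreeGroup (Fin n))) ∪
         Set.range ((Monoid.PushoutI.of
            (φ := fam2Hom (SemidirectProduct.inr.comp i) (SemidirectProduct.inr.comp j))
            false).comp
          (SemidirectProduct.inl :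
            Multiplicative (ZMod p) →* Multiplicative (ZMod p) ⋊[φ] FreeGroup (Fin n)))) := by
  let r := fam2Map (SemidirectProduct.rightHom (φ := φ)) (SemidirectProduct.rightHom (φ := φ))
  let s := fam2Map (SemidirectProduct.inr (φ := φ)) (SemidirectProduct.inr (φ := φ))
  have hr : ∀ b, (r b).comp (fam2Hom (SemidirectProduct.inr.comp i)
      (SemidirectProduct.inr.comp j) b) = fam2Hom i j b := fun b => by
    rw [fam2Map_comp_fam2Hom, ← MonoidHom.comp_assoc, ← MonoidHom.comp_assoc,
      SemidirectProduct.rightHom_comp_inr, MonoidHom.id_comp, MonoidHom.id_comp]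
  have hs : ∀ b, (s b).comp (fam2Hom i j b) = fam2Hom (SemidirectProduct.inr.comp i)
      (SemidirectProduct.inr.comp j) b :=
    fam2Map_comp_fam2Hom _ _ i j
  have hrs : ∀ b, Function.LeftInverse (r b) (s b) := by
    rintro (_ | _) <;> exact SemidirectProduct.rightHom_inr
  have hπ : π = Monoid.PushoutI.map r hr := by
    ext1 b
    rw [Monoid.PushoutI.map_comp_of]
    cases b
    exacts [hπ₂, hπ₁]
  subst hπ
  refine ⟨Monoid.PushoutI.map_surjective_of_leftInverse hr hs hrs, ?_⟩
  rw [Monoid.PushoutI.ker_map_of_leftInverse hr hs hrs, Set.union_eq_iUnion]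
  refine congrArg _ (Set.iUnion_congr fun b => ?_)
  cases b <;> simp only [r, fam2Map, ← SemidirectProduct.range_inl_eq_ker_rightHom,
    MonoidHom.coe_range, ← Set.range_comp, MonoidHom.coe_comp, cond]

/-- Let `A = ℤ/pℤ ⋊[φ] F_n`, let `Γ = A *_{F_m} A` be the pushout of `ĩ = inr ∘ i` and
`j̃ = inr ∘ j`, and let `Λ' = F_n *_{F_m} F_n` be the pushout of `i` and `j`.  The
homomorphism `π : Γ →* Λ'` induced by the projections `rightHom : A →* F_n` is
surjective, with kernel the normal closure of the images of the two copies of `ℤ/pℤ`. -/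
theorem pushout_semidirect_proj_surjective_and_ker
    (p m n : ℕ) (hp : p.Prime) (hm : 1 ≤ m) (hn : 1 ≤ n)
    (φ : FreeGroup (Fin n) →* MulAut (Multiplicative (ZMod p)))
    (i j : FreeGroup (Fin m) →* FreeGroup (Fin n))
    (π : Monoid.PushoutI
          (fam2Hom
            ((SemidirectProduct.inr :
                FreeGroup (Fin n) →* Multiplicative (ZMod p) ⋊[φ] FreeGroup (Fin n)).comp i)
            ((SemidirectProduct.inr :
                FreeGroup (Fin n) →* Multiplicative (ZMod p) ⋊[φ] FreeGroup (Fin n)).comp j))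
          →* Monoid.PushoutI (fam2Hom i j))
    (hπ₁ : π.comp (Monoid.PushoutI.of
              (φ := fam2Hom (SemidirectProduct.inr.comp i) (SemidirectProduct.inr.comp j)) true)
        = (Monoid.PushoutI.of (φ := fam2Hom i j) true).comp
            (SemidirectProduct.rightHom :
              Multiplicative (ZMod p) ⋊[φ] FreeGroup (Fin n) →* FreeGroup (Fin n)))
    (hπ₂ : π.comp (Monoid.PushoutI.of
              (φ := fam2Hom (SemidirectProduct.inr.comp i) (SemidirectProduct.inr.comp j)) false)
        = (Monoid.PushoutI.of (φ := fam2Hom i j) false).comp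
            (SemidirectProduct.rightHom :
              Multiplicative (ZMod p) ⋊[φ] FreeGroup (Fin n) →* FreeGroup (Fin n))) :
    Function.Surjective π ∧
      π.ker = Subgroup.normalClosure
        (Set.range ((Monoid.PushoutI.of
            (φ := fam2Hom (SemidirectProduct.inr.comp i) (SemidirectProduct.inr.comp j))
            true).comp
          (SemidirectProduct.inl :
            Multiplicative (ZMod p) →* Multiplicative (ZMod p) ⋊[φ] FreeGroup (Fin n))) ∪
         Set.range ((Monoid.PushoutI.of
            (φ := fam2Hom (SemidirectProduct.inr.comp i) (SemidirectProduct.inr.comp j))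
            false).comp
          (SemidirectProduct.inl :
            Multiplicative (ZMod p) →* Multiplicative (ZMod p) ⋊[φ] FreeGroup (Fin n)))) :=
  pushout_semidirect_proj_surjective_and_ker_general p m n φ i j π hπ₁ hπ₂
end

section
/- Let p be a prime, let m, n ≥ 1, let φ : F_n → Aut(ℤ/pℤ) be a nontrivial homomorphism (φ(f) ≠ id for some f ∈ F_n), and let A = ℤ/pℤ ⋊_φ F_n. Let i, j : F_m → F_n be injective homomorphisms, let ĩ = inr ∘ i and j̃ = inr ∘ j : F_m → A, and let Γ = A *_{F_m} A be the pushout of ĩ and j̃ with canonical maps of₁, of₂ : A → Γ. Suppose that the subgroup Λ of Γ generated by the images of₁(inr(F_n)) ∪ of₂(inr(F_n)) of the two canonical copies of F_n is infinite and is simple as a group. Then every finite-index subgroup of Γ equals Γ; in particular Γ has no proper finite-index subgroups (its finite residual is all of Γ). -/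
universe u

/-- Every element of `Multiplicative (ZMod p)` is a power of `ofAdd 1`. -/
lemma aux_gen {p : ℕ} [NeZero p] (a : Multiplicative (ZMod p)) :
    Multiplicative.ofAdd (1 : ZMod p) ^ (Multiplicative.toAdd a).val = a := by
  rw [← ofAdd_nsmul, nsmul_eq_mul, mul_one, ZMod.natCast_rightInverse]
  rfl

/-- If a homomorphism out of `Multiplicative (ZMod p)` is invariant under a nontrivial
automorphism, it is trivial. -/
lemma aux_hom_trivial {p : ℕ} (hp : p.Prime) {Q : Type*} [Group Q]
    (σ : MulAut (Multiplicative (ZMod p))) (hσ : σ ≠ 1)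
    (x : Multiplicative (ZMod p) →* Q) (hinv : ∀ a, x (σ a) = x a) :
    ∀ a, x a = 1 := by
  haveI : Fact p.Prime := ⟨hp⟩
  haveI : NeZero p := ⟨hp.ne_zero⟩
  set g : Multiplicative (ZMod p) := Multiplicative.ofAdd (1 : ZMod p) with hg
  let c : ZMod p := Multiplicative.toAdd (σ g)
  have hcg : σ g = g ^ c.val := (aux_gen (σ g)).symm
  -- c ≠ 0
  have hc0 : c ≠ 0 := by
    intro h
    have h1 : σ g = 1 := by
      rw [← ofAdd_toAdd (σ g)]
      show Multiplicative.ofAdd c = 1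
      rw [h]; rfl
    have h2 : g = 1 := σ.injective (by simpa using h1)
    rw [hg] at h2
    have h3 : (1 : ZMod p) = 0 := by simpa using congrArg Multiplicative.toAdd h2
    exact one_ne_zero h3
  -- c ≠ 1
  have hc1 : c ≠ 1 := by
    intro h
    apply hσ
    ext a
    have hga : σ g = g := by
      rw [hcg, h]
      simp [ZMod.val_one_eq_one_mod]
      rw [Nat.mod_eq_of_lt hp.one_lt, pow_one]
    calc σ a = σ (g ^ (Multiplicative.toAdd a).val) := by rw [aux_gen a]
      _ = (σ g) ^ (Multiplicative.toAdd a).val := map_pow _ _ _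
      _ = g ^ (Multiplicative.toAdd a).val := by rw [hga]
      _ = a := aux_gen a
  set q : Q := x g with hq
  have hqp : q ^ p = 1 := by
    rw [hq, ← map_pow, hg, ← ofAdd_nsmul, nsmul_eq_mul, mul_one, ZMod.natCast_self]
    exact map_one x
  have hqc : q ^ c.val = q := by
    rw [hq, ← map_pow, ← hcg]
    exact hinv g
  have hcval0 : c.val ≠ 0 := fun h => hc0 ((ZMod.val_eq_zero c).mp h)
  have hcval1 : c.val ≠ 1 := by
    intro h
    apply hc1
    have h2 := ZMod.natCast_rightInverse (n := p) c
    rw [h] at h2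
    simpa using h2.symm
  have hqsub : q ^ (c.val - 1) = 1 := by
    have h1 : c.val - 1 + 1 = c.val := Nat.succ_pred_eq_of_pos (Nat.pos_of_ne_zero hcval0)
    have h2 := hqc
    rw [← h1, pow_succ] at h2
    exact mul_right_cancel (by rw [h2, one_mul])
  have hq1 : q = 1 := by
    have hd1 : orderOf q ∣ p := orderOf_dvd_of_pow_eq_one hqp
    have hd2 : orderOf q ∣ c.val - 1 := orderOf_dvd_of_pow_eq_one hqsub
    rcases (Nat.Prime.eq_one_or_self_of_dvd hp _ hd1) with h | h
    · exact orderOf_eq_one_iff.mp h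
    · exfalso
      rw [h] at hd2
      have hlt : c.val - 1 < p := lt_of_le_of_lt (Nat.sub_le _ _) (ZMod.val_lt c)
      have hne : c.val - 1 ≠ 0 := by omega
      exact absurd (Nat.le_of_dvd (Nat.pos_of_ne_zero hne) hd2) (not_le.mpr hlt)
  intro a
  calc x a = x (g ^ (Multiplicative.toAdd a).val) := by rw [aux_gen a]
    _ = q ^ (Multiplicative.toAdd a).val := map_pow _ _ _
    _ = 1 := by rw [hq1, one_pow]

/-- If a homomorphism out of a semidirect product `ZMod p ⋊[φ] F` with `φ` nontrivial kills
the `inr` copy of `F` after composing with `π`, then the whole composition is trivial. -/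
lemma aux_key {p : ℕ} (hp : p.Prime) {n : ℕ} {G Q' : Type*} [Group G] [Group Q']
    (φ : FreeGroup (Fin n) →* MulAut (Multiplicative (ZMod p)))
    (hφ : ∃ f : FreeGroup (Fin n), φ f ≠ 1)
    (ob : (Multiplicative (ZMod p) ⋊[φ] FreeGroup (Fin n)) →* G)
    (π : G →* Q') (hob : ∀ g : FreeGroup (Fin n), π (ob (SemidirectProduct.inr g)) = 1) :
    π.comp ob = MonoidHom.comp 1 ob := by
  obtain ⟨f, hf⟩ := hφ
  refine SemidirectProduct.hom_ext ?_ ?_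
  · ext a
    show π (ob (SemidirectProduct.inl a)) = 1
    refine aux_hom_trivial hp (φ f) hf (π.comp (ob.comp SemidirectProduct.inl)) ?_ a
    intro a'
    show π (ob (SemidirectProduct.inl ((φ f) a'))) = π (ob (SemidirectProduct.inl a'))
    rw [SemidirectProduct.inl_aut]
    simp only [map_mul, map_inv, hob f, one_mul, inv_one, mul_one]
  · refine MonoidHom.ext fun g => ?_
    show π (ob (SemidirectProduct.inr g)) = 1
    exact hob g

/-- Let `A = ℤ/pℤ ⋊[φ] F_n` with `φ` nontrivial, and let `Γ = A *_{F_m} A` be the pushout of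
`ĩ = inr ∘ i` and `j̃ = inr ∘ j` for injective `i, j : F_m →* F_n`.  If the subgroup `Λ` of
`Γ` generated by the two canonical copies of `F_n` is infinite and simple, then `Γ` has no
proper finite-index subgroups. -/
theorem pushout_semidirect_no_proper_finiteIndex
    (p m n : ℕ) (hp : p.Prime) (hm : 1 ≤ m) (hn : 1 ≤ n)
    (φ : FreeGroup (Fin n) →* MulAut (Multiplicative (ZMod p)))
    (hφ : ∃ f : FreeGroup (Fin n), φ f ≠ 1)
    (i j : FreeGroup (Fin m) →* FreeGroup (Fin n))
    (hi : Function.Injective i) (hj : Function.Injective j)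
    (Λ : Subgroup (Monoid.PushoutI
          (fam2Hom
            ((SemidirectProduct.inr :
                FreeGroup (Fin n) →* Multiplicative (ZMod p) ⋊[φ] FreeGroup (Fin n)).comp i)
            ((SemidirectProduct.inr :
                FreeGroup (Fin n) →* Multiplicative (ZMod p) ⋊[φ] FreeGroup (Fin n)).comp j))))
    (hΛ : Λ = Subgroup.closure
        (Set.range ((Monoid.PushoutI.of
            (φ := fam2Hom (SemidirectProduct.inr.comp i) (SemidirectProduct.inr.comp j))
            true).comp
          (SemidirectProduct.inr :
            FreeGroup (Fin n) →* Multiplicative (ZMod p) ⋊[φ] FreeGroup (Fin n))) ∪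
         Set.range ((Monoid.PushoutI.of
            (φ := fam2Hom (SemidirectProduct.inr.comp i) (SemidirectProduct.inr.comp j))
            false).comp
          (SemidirectProduct.inr :
            FreeGroup (Fin n) →* Multiplicative (ZMod p) ⋊[φ] FreeGroup (Fin n)))))
    (hinf : Infinite Λ) (hsimple : IsSimpleGroup Λ) :
    ∀ H : Subgroup (Monoid.PushoutI
          (fam2Hom
            ((SemidirectProduct.inr :
                FreeGroup (Fin n) →* Multiplicative (ZMod p) ⋊[φ] FreeGroup (Fin n)).comp i)
            ((SemidirectProduct.inr :
                FreeGroup (Fin n) →* Multiplicative (ZMod p) ⋊[φ] FreeGroup (Fin n)).comp j))),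
      H.FiniteIndex → H = ⊤ := by
  intro H hH
  haveI := hH
  set N := H.normalCore with hN
  haveI : N.FiniteIndex := Subgroup.finiteIndex_normalCore H
  -- Step 1: Λ ≤ N
  have hΛN : Λ ≤ N := by
    have hnorm : (N.subgroupOf Λ).Normal := inferInstance
    rcases hsimple.eq_bot_or_eq_top_of_normal _ hnorm with hbot | htop
    · exfalso
      have h1 : N.relIndex Λ = 0 := by
        rw [Subgroup.relIndex, hbot, Subgroup.index_bot]
        exact Nat.card_eq_zero_of_infinite
      have h2 : N.relIndex Λ ∣ N.index := Subgroup.relIndex_dvd_index_of_normal N Λ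
      rw [h1] at h2
      exact Subgroup.FiniteIndex.index_ne_zero (zero_dvd_iff.mp h2)
    · exact Subgroup.subgroupOf_eq_top.mp htop
  -- Steps 2-3: the quotient map is trivial
  have hπ : QuotientGroup.mk' N = (1 : _ →* _) := by
    apply Monoid.PushoutI.hom_ext_nonempty
    intro b
    cases b
    · refine aux_key hp φ hφ _ (QuotientGroup.mk' N) ?_
      intro g
      refine (QuotientGroup.eq_one_iff _).mpr (hΛN ?_)
      rw [hΛ]
      exact Subgroup.subset_closure (Or.inr ⟨g, rfl⟩)
    · refine aux_key hp φ hφ _ (QuotientGroup.mk' N) ?_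
      intro g
      refine (QuotientGroup.eq_one_iff _).mpr (hΛN ?_)
      rw [hΛ]
      exact Subgroup.subset_closure (Or.inl ⟨g, rfl⟩)
  -- Step 4: conclude
  have hNtop : N = ⊤ := by
    rw [eq_top_iff]
    intro x _
    have := DFunLike.congr_fun hπ x
    exact (QuotientGroup.eq_one_iff x).mp this
  exact eq_top_iff.mpr (hNtop ▸ H.normalCore_le)
end

section
/- (Proposition 4.2.) Let p be a prime, let m, n ≥ 1, let φ : F_n → Aut(ℤ/pℤ) be a nontrivial homomorphism (φ(f) ≠ id for some f ∈ F_n), and let A = ℤ/pℤ ⋊_φ F_n. Let i, j : F_m → F_n be injective homomorphisms, let ĩ = inr ∘ i and j̃ = inr ∘ j : F_m → A, and let Γ = A *_{F_m} A be the pushout of ĩ and j̃ with canonical maps of₁, of₂ : A → Γ. Suppose that the subgroup Λ of Γ generated by the images of₁(inr(F_n)) ∪ of₂(inr(F_n)) of the two canonical copies of F_n is infinite and is simple as a group. Then Γ is not virtually torsion-free: there is no finite-index subgroup H of Γ such that every element of H of finite order is trivial. -/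
/-!
An infinite simple group has no proper finite-index subgroup, so the simple subgroup `Λ` lies in
the normal core of any finite-index subgroup `H` of `Γ`. Choosing `f ∈ F_n` and `a ∈ ℤ/pℤ` with
`φ f a ≠ a`, the commutator of `a` with `f` in `A` is the nontrivial element `a - φ f a` of
order `p`; inside `Γ` it is a commutator with the element `f ∈ Λ`, hence lies in that normal
core, and it stays nontrivial because the factors of an amalgam along injective maps embed.
So every finite-index subgroup of `Γ` has torsion.
-/

universe u

open scoped commutatorElement

theorem Subgroup.le_of_finiteIndex_of_isSimpleGroup {G : Type*} [Group G] (Λ N : Subgroup G)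
    [N.FiniteIndex] [Infinite Λ] [IsSimpleGroup Λ] : Λ ≤ N := by
  have hcore : N.normalCore.subgroupOf Λ = ⊤ := by
    refine (IsSimpleGroup.eq_bot_or_eq_top_of_normal _
      ((normalCore_normal N).subgroupOf Λ)).resolve_left fun hbot => ?_
    have hindex := FiniteIndex.index_ne_zero (H := N.normalCore.subgroupOf Λ)
    rw [hbot, index_bot, Nat.card_eq_zero_of_infinite] at hindex
    exact hindex rfl
  exact (subgroupOf_eq_top.mp hcore).trans (normalCore_le N)

theorem not_exists_finiteIndex_torsionFree_of_commutator_mem {Γ : Type*} [Group Γ]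
    (Λ : Subgroup Γ) [Infinite Λ] [IsSimpleGroup Λ] {g x : Γ} (hx : x ∈ Λ)
    (hfin : IsOfFinOrder ⁅g, x⁆) (hne : ⁅g, x⁆ ≠ 1) :
    ¬ ∃ H : Subgroup Γ, H.FiniteIndex ∧ ∀ h, h ∈ H → IsOfFinOrder h → h = 1 := by
  rintro ⟨H, hH, htorsionFree⟩
  have hxcore : x ∈ H.normalCore := Λ.le_of_finiteIndex_of_isSimpleGroup H.normalCore hx
  have hcomm : ⁅g, x⁆ ∈ H.normalCore :=
    mul_mem ((Subgroup.normalCore_normal H).conj_mem x hxcore g) (inv_mem hxcore)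
  exact hne (htorsionFree _ (H.normalCore_le hcomm) hfin)

namespace SemidirectProduct

variable {N G : Type*} [Group N] [Group G] {φ : G →* MulAut N}

theorem commutator_inl_inr (a : N) (g : G) :
    ⁅(inl a : N ⋊[φ] G), (inr g : N ⋊[φ] G)⁆ = inl (a * (φ g a)⁻¹) := by
  rw [commutatorElement_def, ← map_inv inl, ← map_inv inr, mul_assoc, mul_assoc,
    ← mul_assoc (inr g), ← inl_aut, ← map_mul, map_inv]

theorem commutator_inl_inr_ne_one {a : N} {g : G} (h : φ g a ≠ a) :
    ⁅(inl a : N ⋊[φ] G), (inr g : N ⋊[φ] G)⁆ ≠ 1 := by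
  rw [commutator_inl_inr, Ne, ← map_one inl, inl_inj, mul_inv_eq_one]
  exact Ne.symm h

end SemidirectProduct

theorem fam2Hom_injective {K G₁ G₂ : Type u} [Group K] [Group G₁] [Group G₂]
    {φ₁ : K →* G₁} {φ₂ : K →* G₂} (h₁ : Function.Injective φ₁) (h₂ : Function.Injective φ₂) :
    ∀ b, Function.Injective (fam2Hom φ₁ φ₂ b)
  | true => h₁
  | false => h₂

theorem pushout_semidirect_not_virtually_torsionFree_general
    (p m n : ℕ) (hp : p.Prime)
    (φ : FreeGroup (Fin n) →* MulAut (Multiplicative (ZMod p)))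
    (hφ : ∃ f : FreeGroup (Fin n), φ f ≠ 1)
    (i j : FreeGroup (Fin m) →* FreeGroup (Fin n))
    (hi : Function.Injective i) (hj : Function.Injective j)
    (Λ : Subgroup (Monoid.PushoutI
          (fam2Hom
            ((SemidirectProduct.inr :
                FreeGroup (Fin n) →* Multiplicative (ZMod p) ⋊[φ] FreeGroup (Fin n)).comp i)
            ((SemidirectProduct.inr :
                FreeGroup (Fin n) →* Multiplicative (ZMod p) ⋊[φ] FreeGroup (Fin n)).comp j))))
    (hΛ : Λ = Subgroup.closure
        (Set.range ((Monoid.PushoutI.of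
            (φ := fam2Hom (SemidirectProduct.inr.comp i) (SemidirectProduct.inr.comp j))
            true).comp
          (SemidirectProduct.inr :
            FreeGroup (Fin n) →* Multiplicative (ZMod p) ⋊[φ] FreeGroup (Fin n))) ∪
         Set.range ((Monoid.PushoutI.of
            (φ := fam2Hom (SemidirectProduct.inr.comp i) (SemidirectProduct.inr.comp j))
            false).comp
          (SemidirectProduct.inr :
            FreeGroup (Fin n) →* Multiplicative (ZMod p) ⋊[φ] FreeGroup (Fin n)))))
    (hinf : Infinite Λ) (hsimple : IsSimpleGroup Λ) :
    ¬ ∃ H : Subgroup (Monoid.PushoutI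
          (fam2Hom
            ((SemidirectProduct.inr :
                FreeGroup (Fin n) →* Multiplicative (ZMod p) ⋊[φ] FreeGroup (Fin n)).comp i)
            ((SemidirectProduct.inr :
                FreeGroup (Fin n) →* Multiplicative (ZMod p) ⋊[φ] FreeGroup (Fin n)).comp j))),
      H.FiniteIndex ∧ ∀ h, h ∈ H → IsOfFinOrder h → h = 1 := by
  have : NeZero p := ⟨hp.ne_zero⟩
  obtain ⟨f, hf⟩ := hφ
  obtain ⟨a, ha⟩ : ∃ a, φ f a ≠ a := by
    by_contra! hfix
    exact hf (MulEquiv.ext hfix)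
  set A := Multiplicative (ZMod p) ⋊[φ] FreeGroup (Fin n)
  set of₁ := Monoid.PushoutI.of (φ := fam2Hom
    ((SemidirectProduct.inr : FreeGroup (Fin n) →* A).comp i)
    ((SemidirectProduct.inr : FreeGroup (Fin n) →* A).comp j)) true
  have hof₁ : Function.Injective of₁ := by
    refine Monoid.PushoutI.of_injective (fam2Hom_injective ?_ ?_) true
    exacts [SemidirectProduct.inr_injective.comp hi, SemidirectProduct.inr_injective.comp hj]
  have hfΛ : of₁ (SemidirectProduct.inr f) ∈ Λ := by
    rw [hΛ]
    exact Subgroup.subset_closure (Or.inl ⟨f, rfl⟩)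
  refine not_exists_finiteIndex_torsionFree_of_commutator_mem Λ
    (g := of₁ (SemidirectProduct.inl a)) hfΛ ?_ ?_
  · rw [← map_commutatorElement, SemidirectProduct.commutator_inl_inr]
    exact (of₁.comp SemidirectProduct.inl).isOfFinOrder (isOfFinOrder_of_finite _)
  · rw [← map_commutatorElement, Ne, ← map_one of₁, hof₁.eq_iff]
    exact SemidirectProduct.commutator_inl_inr_ne_one ha

/-- (Proposition 4.2.)  Let `A = ℤ/pℤ ⋊[φ] F_n` with `φ` nontrivial, and let
`Γ = A *_{F_m} A` be the pushout of `ĩ = inr ∘ i` and `j̃ = inr ∘ j` for injective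
`i, j : F_m →* F_n`.  If the subgroup `Λ` of `Γ` generated by the two canonical copies of
`F_n` is infinite and simple, then `Γ` is not virtually torsion-free. -/
theorem pushout_semidirect_not_virtually_torsionFree
    (p m n : ℕ) (hp : p.Prime) (hm : 1 ≤ m) (hn : 1 ≤ n)
    (φ : FreeGroup (Fin n) →* MulAut (Multiplicative (ZMod p)))
    (hφ : ∃ f : FreeGroup (Fin n), φ f ≠ 1)
    (i j : FreeGroup (Fin m) →* FreeGroup (Fin n))
    (hi : Function.Injective i) (hj : Function.Injective j)
    (Λ : Subgroup (Monoid.PushoutI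
          (fam2Hom
            ((SemidirectProduct.inr :
                FreeGroup (Fin n) →* Multiplicative (ZMod p) ⋊[φ] FreeGroup (Fin n)).comp i)
            ((SemidirectProduct.inr :
                FreeGroup (Fin n) →* Multiplicative (ZMod p) ⋊[φ] FreeGroup (Fin n)).comp j))))
    (hΛ : Λ = Subgroup.closure
        (Set.range ((Monoid.PushoutI.of
            (φ := fam2Hom (SemidirectProduct.inr.comp i) (SemidirectProduct.inr.comp j))
            true).comp
          (SemidirectProduct.inr :
            FreeGroup (Fin n) →* Multiplicative (ZMod p) ⋊[φ] FreeGroup (Fin n))) ∪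
         Set.range ((Monoid.PushoutI.of
            (φ := fam2Hom (SemidirectProduct.inr.comp i) (SemidirectProduct.inr.comp j))
            false).comp
          (SemidirectProduct.inr :
            FreeGroup (Fin n) →* Multiplicative (ZMod p) ⋊[φ] FreeGroup (Fin n)))))
    (hinf : Infinite Λ) (hsimple : IsSimpleGroup Λ) :
    ¬ ∃ H : Subgroup (Monoid.PushoutI
          (fam2Hom
            ((SemidirectProduct.inr :
                FreeGroup (Fin n) →* Multiplicative (ZMod p) ⋊[φ] FreeGroup (Fin n)).comp i)
            ((SemidirectProduct.inr :
                FreeGroup (Fin n) →* Multiplicative (ZMod p) ⋊[φ] FreeGroup (Fin n)).comp j))),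
      H.FiniteIndex ∧ ∀ h, h ∈ H → IsOfFinOrder h → h = 1 :=
  pushout_semidirect_not_virtually_torsionFree_general p m n hp φ hφ i j hi hj Λ hΛ hinf hsimple
end
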